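/- arXiv:1807.05955 — 3 statements merged into one kernel-verified Lean document; each statement's English description precedes it below -/
import Mathlib

section
/- Let G be a connected k-uniform hypergraph with two disjoint edges e = {u_1,...,u_k} and f = {v_1,...,v_k}, and let G' be obtained from G by replacing e, f with e' = (e \ U_1) ∪ V_1 and f' = (f \ V_1) ∪ U_1, where U_1 = {u_1,...,u_r}, V_1 = {v_1,...,v_r}, 1 ≤ r ≤ k-1, and U_2 = e \ U_1, V_2 = f \ V_1. Then for any nonnegative vector x, the difference of quadratic forms satisfies x^T(Q(G')x^{k-1}) − x^T(Q(G)x^{k-1}) = k·(x_{V_2} − x_{U_2})·(x_{U_1} − x_{V_1}), where x_{S} denotes Π_{v∈S} x_v. In particular, if x_{U_1} ≥ x_{V_1} and x_{U_2} ≤ x_{V_2}, this difference is nonnegative. -/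
open scoped Classical BigOperators

namespace SLT

variable {V : Type*}

/-- A hypergraph (edge set over vertex type `V`) is `k`-uniform if every edge has exactly `k` vertices. -/
def IsUniform (k : ℕ) (E : Finset (Finset V)) : Prop :=
  ∀ e ∈ E, e.card = k

/-- The degree of a vertex: the number of edges containing it. -/
noncomputable def degree (E : Finset (Finset V)) (v : V) : ℕ :=
  (E.filter (fun e => v ∈ e)).card

/-- `Chains vs es` : the alternating sequence of vertices `vs` and edges `es` forms a
walk, i.e. consecutive vertices both lie in the corresponding edge. -/
def Chains : List V → List (Finset V) → Prop
  | [_], [] => True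
  | u :: v :: vs, e :: es => u ∈ e ∧ v ∈ e ∧ Chains (v :: vs) es
  | _, _ => False

/-- A path in a hypergraph: distinct vertices, distinct edges, all edges in `E`,
with consecutive vertices in the corresponding edge. -/
def IsPath (E : Finset (Finset V)) (vs : List V) (es : List (Finset V)) : Prop :=
  vs.Nodup ∧ es.Nodup ∧ (∀ e ∈ es, e ∈ E) ∧ Chains vs es

/-- A hypergraph is connected if any two vertices are joined by a path. -/
def HConnected (E : Finset (Finset V)) : Prop :=
  ∀ u v : V, ∃ vs es, IsPath E vs es ∧ vs.head? = some u ∧ vs.getLast? = some v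

/-- A cycle: at least two distinct edges, distinct vertices, closing up at the first vertex. -/
def IsCycle (E : Finset (Finset V)) (vs : List V) (es : List (Finset V)) : Prop :=
  2 ≤ es.length ∧ vs.Nodup ∧ es.Nodup ∧ (∀ e ∈ es, e ∈ E) ∧
  ∃ u, vs.head? = some u ∧ Chains (vs ++ [u]) es

/-- A `k`-uniform supertree: connected and acyclic `k`-uniform hypergraph. -/
def IsSupertree (k : ℕ) (E : Finset (Finset V)) : Prop :=
  IsUniform k E ∧ HConnected E ∧ ∀ vs es, ¬ IsCycle E vs es

/-- The quadratic form `x^T (Q(G) x^{k-1})` of the signless Laplacian tensor of a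
`k`-uniform hypergraph. -/
noncomputable def qform (k : ℕ) (E : Finset (Finset V)) (x : V → ℝ) : ℝ :=
  ∑ e ∈ E, ((∑ i ∈ e, x i ^ k) + k * ∏ i ∈ e, x i)

/-- The `i`-th component of `Q(G) x^{k-1}` for a `k`-uniform hypergraph. -/
noncomputable def Qcomp (k : ℕ) (E : Finset (Finset V)) (x : V → ℝ) (i : V) : ℝ :=
  ∑ e ∈ E.filter (fun e => i ∈ e), (x i ^ (k-1) + ∏ j ∈ e.erase i, x j)

/-- The signless Laplacian spectral radius `q(G)`, via Qi's variational characterization: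
the supremum of the quadratic form over nonnegative vectors with `∑ x_v^k = 1`. -/
noncomputable def qrad [Fintype V] (k : ℕ) (E : Finset (Finset V)) : ℝ :=
  sSup {r | ∃ x : V → ℝ, (∀ v, 0 ≤ x v) ∧ (∑ v, x v ^ k) = 1 ∧ r = qform k E x}

/-- `x` is the principal eigenvector of `Q(G)`: positive, unit (`∑ x_v^k = 1`), and an
eigenvector for the eigenvalue `q(G)`. -/
def IsPrincipalEig [Fintype V] (k : ℕ) (E : Finset (Finset V)) (x : V → ℝ) : Prop :=
  (∀ v, 0 < x v) ∧ (∑ v, x v ^ k) = 1 ∧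
  ∀ i, Qcomp k E x i = qrad k E * x i ^ (k-1)

section QuadraticForm

variable [DecidableEq V] (k : ℕ) (x : V → ℝ)

theorem qform_replace_sub {E S S' : Finset (Finset V)} (hS : S ⊆ E)
    (hS' : Disjoint (E \ S) S') :
    qform k ((E \ S) ∪ S') x - qform k E x = qform k S' x - qform k S x := by
  rw [qform, qform, qform, qform, Finset.sum_union hS', ← Finset.sum_sdiff hS]
  ring

theorem qform_pair {e f : Finset V} (hef : e ≠ f) :
    qform k {e, f} x = qform k {e} x + qform k {f} x := by
  simp only [qform, Finset.sum_pair hef, Finset.sum_singleton]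

theorem qform_singleton_union {s t : Finset V} (hst : Disjoint s t) :
    qform k {s ∪ t} x = (∑ i ∈ s, x i ^ k) + (∑ i ∈ t, x i ^ k)
      + k * ((∏ i ∈ s, x i) * ∏ i ∈ t, x i) := by
  rw [qform, Finset.sum_singleton, Finset.sum_union hst, Finset.prod_union hst]

theorem qform_exchange_parts {A B C D : Finset V} (hAB : Disjoint A B) (hCD : Disjoint C D)
    (hAD : Disjoint A D) (hCB : Disjoint C B) :
    qform k {A ∪ D} x + qform k {C ∪ B} x - (qform k {A ∪ B} x + qform k {C ∪ D} x)
      = k * ((∏ v ∈ C, x v) - (∏ v ∈ A, x v)) * ((∏ v ∈ B, x v) - (∏ v ∈ D, x v)) := by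
  rw [qform_singleton_union k x hAD, qform_singleton_union k x hCB,
    qform_singleton_union k x hAB, qform_singleton_union k x hCD]
  ring

end QuadraticForm

theorem two_switch_qform_general (k : ℕ)
    {V : Type*} [DecidableEq V]
    (E : Finset (Finset V))
    (e f : Finset V) (he : e ∈ E) (hf : f ∈ E) (hef : Disjoint e f)
    (U1 V1 : Finset V) (hU1 : U1 ⊆ e) (hV1 : V1 ⊆ f)
    (e' f' : Finset V) (he' : e' = (e \ U1) ∪ V1) (hf' : f' = (f \ V1) ∪ U1)
    (he'E : e' ∉ E) (hf'E : f' ∉ E) (he'f' : e' ≠ f')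
    (E' : Finset (Finset V)) (hE' : E' = (E \ {e, f}) ∪ {e', f'})
    (x : V → ℝ) :
    qform k E' x - qform k E x
        = k * ((∏ v ∈ f \ V1, x v) - (∏ v ∈ e \ U1, x v))
            * ((∏ v ∈ U1, x v) - (∏ v ∈ V1, x v)) ∧
      ((∏ v ∈ V1, x v) ≤ (∏ v ∈ U1, x v) → (∏ v ∈ e \ U1, x v) ≤ (∏ v ∈ f \ V1, x v) →
        0 ≤ qform k E' x - qform k E x) := by
  have hne : e ≠ f := by
    rintro rfl
    obtain rfl : e = ∅ := Finset.disjoint_self_iff_empty e |>.mp hef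
    rw [Finset.subset_empty] at hU1 hV1
    subst hU1 hV1
    exact he'f' (he'.trans hf'.symm)
  have hpair : {e, f} ⊆ E := Finset.insert_subset he (Finset.singleton_subset_iff.mpr hf)
  have hnew : Disjoint (E \ {e, f}) {e', f'} := by
    rw [Finset.disjoint_insert_right, Finset.disjoint_singleton_right]
    exact ⟨fun h => he'E (Finset.mem_sdiff.mp h).1, fun h => hf'E (Finset.mem_sdiff.mp h).1⟩
  have key : qform k E' x - qform k E x
      = k * ((∏ v ∈ f \ V1, x v) - (∏ v ∈ e \ U1, x v))
          * ((∏ v ∈ U1, x v) - (∏ v ∈ V1, x v)) := by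
    have hswap := qform_exchange_parts k x Finset.sdiff_disjoint Finset.sdiff_disjoint
      (hef.mono Finset.sdiff_subset hV1) (hef.symm.mono Finset.sdiff_subset hU1)
    rw [Finset.sdiff_union_of_subset hU1, Finset.sdiff_union_of_subset hV1] at hswap
    rw [hE', qform_replace_sub k x hpair hnew, qform_pair k x he'f', qform_pair k x hne, he', hf',
      hswap]
  refine ⟨key, fun hprod1 hprod2 => ?_⟩
  rw [key]
  exact mul_nonneg (mul_nonneg k.cast_nonneg (sub_nonneg.mpr hprod2)) (sub_nonneg.mpr hprod1)

/-- the 2-switch identity for the signless Laplacian quadratic form, and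
its nonnegativity under the product hypotheses. -/
theorem two_switch_qform (k r : ℕ) (hr1 : 1 ≤ r) (hrk : r ≤ k - 1)
    {V : Type*} [Fintype V] [DecidableEq V]
    (E : Finset (Finset V)) (hu : IsUniform k E) (hc : HConnected E)
    (e f : Finset V) (he : e ∈ E) (hf : f ∈ E) (hef : Disjoint e f)
    (U1 V1 : Finset V) (hU1 : U1 ⊆ e) (hV1 : V1 ⊆ f)
    (hU1c : U1.card = r) (hV1c : V1.card = r)
    (e' f' : Finset V) (he' : e' = (e \ U1) ∪ V1) (hf' : f' = (f \ V1) ∪ U1)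
    (he'E : e' ∉ E) (hf'E : f' ∉ E) (he'f' : e' ≠ f')
    (E' : Finset (Finset V)) (hE' : E' = (E \ {e, f}) ∪ {e', f'})
    (x : V → ℝ) (hx : ∀ v, 0 ≤ x v) :
    qform k E' x - qform k E x
        = k * ((∏ v ∈ f \ V1, x v) - (∏ v ∈ e \ U1, x v))
            * ((∏ v ∈ U1, x v) - (∏ v ∈ V1, x v)) ∧
      ((∏ v ∈ V1, x v) ≤ (∏ v ∈ U1, x v) → (∏ v ∈ e \ U1, x v) ≤ (∏ v ∈ f \ V1, x v) →
        0 ≤ qform k E' x - qform k E x) :=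
  two_switch_qform_general k E e f he hf hef U1 V1 hU1 hV1 e' f' he' hf' he'E hf'E he'f' E' hE' x

end SLT
end

section
/- Let G be a connected k-uniform hypergraph and G' obtained from G by a 2-switch e ⇌ f exchanging U_1 ⊂ e for V_1 ⊂ f (with e ∩ f = ∅, |U_1| = |V_1| = r, 1 ≤ r ≤ k−1). Let x be the positive principal eigenvector of Q(G) with Σ x_i^k = 1. If x_{U_1} ≥ x_{V_1} and x_{U_2} ≤ x_{V_2} (where U_2 = e\U_1, V_2 = f\V_1, and x_S = Π_{v∈S} x_v), then q(G) ≤ q(G'), where q denotes the signless Laplacian spectral radius. Moreover, if one of the two inequalities is strict, then q(G) < q(G'). -/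
/-!
At the principal eigenvector `x` of `G`, the quadratic forms of `G` and `G'` differ only in the
four switched edges: their vertex power sums cancel and their products change by
`k (x_{U₁} - x_{V₁}) (x_{V₂} - x_{U₂}) ≥ 0`. Hence `q(G) = x^T Q(G) x^{k-1} ≤ x^T Q(G') x^{k-1} ≤ q(G')`.
If `q(G) = q(G')`, then `x` also maximizes the form of `G'`, so by the first-order condition it is
an eigenvector of `Q(G')` for the same eigenvalue. Subtracting the two eigenequations at a vertex
of `U₂` gives `x_{U₁} = x_{V₁}`, and at a vertex of `U₁` gives `x_{U₂} = x_{V₂}`.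
-/

open scoped Classical BigOperators

namespace SLT

variable {V : Type*}

open Finset Function

section Switch

variable {ι : Type*} [DecidableEq ι]

theorem sum_sdiff_pair_union_pair {M : Type*} [AddCommGroup M] {s : Finset ι} {a b c d : ι}
    (ha : a ∈ s) (hb : b ∈ s) (hab : a ≠ b) (hc : c ∉ s) (hd : d ∉ s) (hcd : c ≠ d)
    (F : ι → M) :
    ∑ i ∈ (s \ {a, b}) ∪ {c, d}, F i = ∑ i ∈ s, F i - F a - F b + F c + F d := by
  have hdisj : Disjoint (s \ {a, b}) {c, d} :=
    (disjoint_insert_right.2 ⟨hc, disjoint_singleton_right.2 hd⟩).mono_left sdiff_subset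
  rw [sum_union hdisj, sum_pair hcd, ← sum_sdiff (insert_subset ha (singleton_subset_iff.2 hb)),
    sum_pair hab]
  abel

theorem sum_comp_update_of_mem {β M : Type*} [AddCommMonoid M] {s : Finset ι}
    {i : ι} (hi : i ∈ s) (φ : β → M) (x : ι → β) (b : β) :
    ∑ j ∈ s, φ (update x i b j) = φ b + ∑ j ∈ s.erase i, φ (x j) := by
  rw [← add_sum_erase s _ hi, update_self]
  exact congrArg _ (sum_congr rfl fun j hj => by rw [update_of_ne (ne_of_mem_erase hj)])

def twoSwitch (E : Finset (Finset ι)) (e f U W : Finset ι) : Finset (Finset ι) :=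
  (E \ {e, f}) ∪ {e \ U ∪ W, f \ W ∪ U}

variable {E : Finset (Finset ι)} {e f U W : Finset ι}

theorem ne_of_sdiff_union_notMem (he : e ∈ E) (hef : Disjoint e f) (hU : U ⊆ e) (hW : W ⊆ f)
    (he' : e \ U ∪ W ∉ E) : e ≠ f := by
  rintro rfl
  obtain rfl := (disjoint_self_iff_empty e).1 hef
  obtain rfl := subset_empty.1 hU
  obtain rfl := subset_empty.1 hW
  exact he' (by simpa using he)

theorem card_sdiff_union_of_card_eq (hU : U ⊆ e) (hW : Disjoint e W) (hcard : U.card = W.card) :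
    (e \ U ∪ W).card = e.card := by
  rw [card_union_of_disjoint (hW.mono_left sdiff_subset), card_sdiff_of_subset hU, ← hcard,
    Nat.sub_add_cancel (card_le_card hU)]

theorem IsUniform.twoSwitch {k : ℕ} (hu : IsUniform k E) (he : e ∈ E) (hf : f ∈ E)
    (hef : Disjoint e f) (hU : U ⊆ e) (hW : W ⊆ f) (hcard : U.card = W.card) :
    IsUniform k (twoSwitch E e f U W) := by
  intro g hg
  simp only [SLT.twoSwitch, mem_union, mem_sdiff, mem_insert, mem_singleton] at hg
  rcases hg with ⟨hg, -⟩ | rfl | rfl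
  · exact hu g hg
  · rw [card_sdiff_union_of_card_eq hU (hef.mono_right hW) hcard, hu e he]
  · rw [card_sdiff_union_of_card_eq hW (hef.symm.mono_right hU) hcard.symm, hu f hf]

theorem sum_sdiff_union_add_sum_sdiff_union {M : Type*} [AddCommMonoid M] (F : ι → M)
    (hef : Disjoint e f) (hU : U ⊆ e) (hW : W ⊆ f) :
    ∑ i ∈ e \ U ∪ W, F i + ∑ i ∈ f \ W ∪ U, F i = ∑ i ∈ e, F i + ∑ i ∈ f, F i := by
  rw [sum_union (hef.mono sdiff_subset hW), sum_union (hef.symm.mono sdiff_subset hU),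
    ← sum_sdiff hU, ← sum_sdiff hW]
  abel

theorem prod_sdiff_union_add_prod_sdiff_union {R : Type*} [CommRing R] (x : ι → R)
    (hef : Disjoint e f) (hU : U ⊆ e) (hW : W ⊆ f) :
    ∏ i ∈ e \ U ∪ W, x i + ∏ i ∈ f \ W ∪ U, x i = ∏ i ∈ e, x i + ∏ i ∈ f, x i +
      (∏ i ∈ U, x i - ∏ i ∈ W, x i) * (∏ i ∈ f \ W, x i - ∏ i ∈ e \ U, x i) := by
  rw [prod_union (hef.mono sdiff_subset hW), prod_union (hef.symm.mono sdiff_subset hU),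
    ← prod_sdiff hU, ← prod_sdiff hW]
  ring

theorem qform_twoSwitch (k : ℕ) (x : ι → ℝ) (he : e ∈ E) (hf : f ∈ E) (hef : Disjoint e f)
    (hU : U ⊆ e) (hW : W ⊆ f) (he' : e \ U ∪ W ∉ E) (hf' : f \ W ∪ U ∉ E)
    (he'f' : e \ U ∪ W ≠ f \ W ∪ U) :
    qform k (twoSwitch E e f U W) x = qform k E x +
      k * ((∏ i ∈ U, x i - ∏ i ∈ W, x i) * (∏ i ∈ f \ W, x i - ∏ i ∈ e \ U, x i)) := by
  have hsum := sum_sdiff_union_add_sum_sdiff_union (fun i => x i ^ k) hef hU hW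
  have hprod := prod_sdiff_union_add_prod_sdiff_union x hef hU hW
  rw [qform, qform, SLT.twoSwitch, sum_sdiff_pair_union_pair he hf
    (ne_of_sdiff_union_notMem he hef hU hW he') he' hf' he'f']
  linear_combination hsum + (k : ℝ) * hprod

end Switch

section Spectral

variable {k : ℕ} {E : Finset (Finset V)}

theorem qform_smul (hu : IsUniform k E) (c : ℝ) (x : V → ℝ) :
    qform k E (fun v => c * x v) = c ^ k * qform k E x := by
  unfold qform
  rw [mul_sum]
  refine sum_congr rfl fun e he => ?_
  rw [prod_mul_distrib, prod_const, hu e he, mul_add, mul_sum, mul_left_comm]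
  simp_rw [mul_pow]

theorem mul_Qcomp (hk : 1 ≤ k) (E : Finset (Finset V)) (x : V → ℝ) (i : V) :
    x i * Qcomp k E x i = ∑ g ∈ E with i ∈ g, (x i ^ k + ∏ j ∈ g, x j) := by
  rw [Qcomp, mul_sum]
  refine sum_congr rfl fun g hg => ?_
  rw [mul_add, ← pow_succ', Nat.sub_add_cancel hk, mul_prod_erase g x (mem_filter.1 hg).2]

theorem hasDerivAt_qform_update (E : Finset (Finset V)) (x : V → ℝ) (i : V) :
    HasDerivAt (fun s => qform k E (update x i s)) (k * Qcomp k E x i) (x i) := by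
  have hedge : ∀ g ∈ E, HasDerivAt
      (fun s => ∑ j ∈ g, update x i s j ^ k + k * ∏ j ∈ g, update x i s j)
      (if i ∈ g then k * (x i ^ (k - 1) + ∏ j ∈ g.erase i, x j) else 0) (x i) := by
    intro g _
    split_ifs with hi
    · have hpoly : (fun s => ∑ j ∈ g, update x i s j ^ k + k * ∏ j ∈ g, update x i s j) =
          fun s => s ^ k + ∑ j ∈ g.erase i, x j ^ k + k * (s * ∏ j ∈ g.erase i, x j) := by
        funext s
        rw [sum_comp_update_of_mem hi (· ^ k), prod_update_of_mem hi, sdiff_singleton_eq_erase]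
      rw [hpoly]
      refine (((hasDerivAt_pow k (x i)).add_const _).add
        (((hasDerivAt_id (x i)).mul_const _).const_mul (k : ℝ))).congr_deriv ?_
      ring
    · have hconst : (fun s => ∑ j ∈ g, update x i s j ^ k + k * ∏ j ∈ g, update x i s j) =
          fun _ => ∑ j ∈ g, x j ^ k + k * ∏ j ∈ g, x j := by
        funext s
        have hupd : ∀ j ∈ g, update x i s j = x j := fun j hj =>
          update_of_ne (ne_of_mem_of_not_mem hj hi) _ _
        rw [sum_congr rfl fun j hj => by rw [hupd j hj], prod_congr rfl hupd]
      rw [hconst]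
      exact hasDerivAt_const _ _
  refine (HasDerivAt.fun_sum hedge).congr_deriv ?_
  rw [Qcomp, mul_sum, sum_filter]

theorem prod_eq_of_Qcomp_twoSwitch_eq [DecidableEq V] (hk : 1 ≤ k) {e f U W : Finset V}
    {x : V → ℝ} (hpos : ∀ v, 0 < x v) (he : e ∈ E) (hf : f ∈ E) (hef : Disjoint e f)
    (hU : U ⊆ e) (hW : W ⊆ f) (he' : e \ U ∪ W ∉ E) (hf' : f \ W ∪ U ∉ E)
    (he'f' : e \ U ∪ W ≠ f \ W ∪ U)
    (hQ : ∀ w, Qcomp k (twoSwitch E e f U W) x w = Qcomp k E x w)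
    (heU : (e \ U).Nonempty) (hU0 : U.Nonempty) :
    ∏ i ∈ U, x i = ∏ i ∈ W, x i ∧ ∏ i ∈ e \ U, x i = ∏ i ∈ f \ W, x i := by
  have hne := ne_of_sdiff_union_notMem he hef hU hW he'
  -- `x w` times the common eigenequation at `w`: the edges shared by `E` and the switch cancel.
  have hvertex (w : V) := congrArg (x w * ·) (hQ w)
  simp only [mul_Qcomp hk, sum_filter, SLT.twoSwitch,
    sum_sdiff_pair_union_pair he hf hne he' hf' he'f'] at hvertex
  have hprod_pos : ∀ s : Finset V, 0 < ∏ j ∈ s, x j := fun s => prod_pos fun j _ => hpos j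
  constructor
  · obtain ⟨w, hw⟩ := heU
    obtain ⟨hwe, hwU⟩ := mem_sdiff.1 hw
    have hwf : w ∉ f := disjoint_left.1 hef hwe
    have hwe' : w ∈ e \ U ∪ W := mem_union_left W hw
    have hwf' : w ∉ f \ W ∪ U := by simp [hwf, hwU]
    have h := hvertex w
    rw [if_pos hwe, if_neg hwf, if_pos hwe', if_neg hwf'] at h
    have hprod : ∏ j ∈ e \ U ∪ W, x j = ∏ j ∈ e, x j := by linarith
    rw [prod_union (hef.mono sdiff_subset hW), ← prod_sdiff hU] at hprod
    exact (mul_left_cancel₀ (hprod_pos _).ne' hprod).symm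
  · obtain ⟨u, hu⟩ := hU0
    have huf : u ∉ f := disjoint_left.1 hef (hU hu)
    have huW : u ∉ W := fun h => huf (hW h)
    have hue' : u ∉ e \ U ∪ W := by simp [hu, huW]
    have huf' : u ∈ f \ W ∪ U := mem_union_right _ hu
    have h := hvertex u
    rw [if_pos (hU hu), if_neg huf, if_neg hue', if_pos huf'] at h
    have hprod : ∏ j ∈ f \ W ∪ U, x j = ∏ j ∈ e, x j := by linarith
    rw [prod_union (hef.symm.mono sdiff_subset hU), ← prod_sdiff hU] at hprod
    exact (mul_right_cancel₀ (hprod_pos _).ne' hprod).symm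

variable [Fintype V]

theorem sum_mul_Qcomp (hk : 1 ≤ k) (hu : IsUniform k E) (x : V → ℝ) :
    ∑ v, x v * Qcomp k E x v = qform k E x := by
  simp_rw [mul_Qcomp hk, sum_filter]
  rw [sum_comm]
  refine sum_congr rfl fun g hg => ?_
  rw [← sum_filter, filter_univ_mem, sum_add_distrib, sum_const, hu g hg, nsmul_eq_mul]

theorem bddAbove_qform (hk : 1 ≤ k) (E : Finset (Finset V)) :
    BddAbove {r | ∃ x : V → ℝ, (∀ v, 0 ≤ x v) ∧ (∑ v, x v ^ k) = 1 ∧ r = qform k E x} := by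
  refine ⟨∑ e ∈ E, ((e.card : ℝ) + k), ?_⟩
  rintro r ⟨x, hx0, hx1, rfl⟩
  have hle1 : ∀ v, x v ≤ 1 := fun v =>
    (pow_le_one_iff_of_nonneg (hx0 v) (by omega)).1
      (hx1 ▸ single_le_sum (fun v _ => pow_nonneg (hx0 v) k) (mem_univ v))
  refine sum_le_sum fun e _ => add_le_add ?_ ?_
  · exact (sum_le_sum fun i _ => pow_le_one₀ (hx0 i) (hle1 i)).trans_eq (by simp)
  · exact mul_le_of_le_one_right k.cast_nonneg (prod_le_one (fun i _ => hx0 i) fun i _ => hle1 i)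

theorem qform_le_qrad (hk : 1 ≤ k) {x : V → ℝ} (hx0 : ∀ v, 0 ≤ x v) (hx1 : ∑ v, x v ^ k = 1) :
    qform k E x ≤ qrad k E :=
  le_csSup (bddAbove_qform hk E) ⟨x, hx0, hx1, rfl⟩

theorem qform_le_qrad_mul (hk : 1 ≤ k) (hu : IsUniform k E) {y : V → ℝ} (hy : ∀ v, 0 ≤ y v)
    (hN : 0 < ∑ v, y v ^ k) : qform k E y ≤ qrad k E * ∑ v, y v ^ k := by
  set N := ∑ v, y v ^ k
  set c : ℝ := (N ^ (k : ℝ)⁻¹)⁻¹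
  have hck : c ^ k = N⁻¹ := by rw [inv_pow, Real.rpow_inv_natCast_pow hN.le (by omega)]
  have hunit : ∑ v, (c * y v) ^ k = 1 := by
    simp_rw [mul_pow]
    rw [← mul_sum, hck, inv_mul_cancel₀ hN.ne']
  calc qform k E y = N * qform k E (fun v => c * y v) := by
        rw [qform_smul hu, hck, ← mul_assoc, mul_inv_cancel₀ hN.ne', one_mul]
    _ ≤ N * qrad k E := mul_le_mul_of_nonneg_left
        (qform_le_qrad hk (fun v => mul_nonneg (by positivity) (hy v)) hunit) hN.le
    _ = qrad k E * N := mul_comm _ _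

theorem IsPrincipalEig.qrad_eq_qform (hk : 1 ≤ k) (hu : IsUniform k E) {x : V → ℝ}
    (hx : IsPrincipalEig k E x) : qrad k E = qform k E x := by
  obtain ⟨-, hsum, heig⟩ := hx
  rw [← sum_mul_Qcomp hk hu]
  calc qrad k E = ∑ v, qrad k E * x v ^ k := by rw [← mul_sum, hsum, mul_one]
    _ = ∑ v, x v * Qcomp k E x v := sum_congr rfl fun v _ => by
        rw [heig, mul_left_comm, ← pow_succ', Nat.sub_add_cancel hk]

theorem hasDerivAt_sum_pow_update (x : V → ℝ) (i : V) :
    HasDerivAt (fun s => ∑ v, update x i s v ^ k) (k * x i ^ (k - 1)) (x i) := by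
  simp_rw [sum_comp_update_of_mem (mem_univ i) (· ^ k)]
  exact (hasDerivAt_pow k (x i)).add_const _

theorem isPrincipalEig_of_qform_eq_qrad (hk : 1 ≤ k) (hu : IsUniform k E) {x : V → ℝ}
    (hpos : ∀ v, 0 < x v) (hsum : ∑ v, x v ^ k = 1) (hmax : qform k E x = qrad k E) :
    IsPrincipalEig k E x := by
  refine ⟨hpos, hsum, fun i => ?_⟩
  set φ : ℝ → ℝ := fun s => qform k E (update x i s) - qrad k E * ∑ v, update x i s v ^ k
  have hlocal : IsLocalMax φ (x i) := by
    filter_upwards [Ioi_mem_nhds (hpos i)] with s hs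
    have hy : ∀ v, 0 ≤ update x i s v := fun v => by
      rcases eq_or_ne v i with rfl | hv
      · simpa using hs.le
      · simpa [update_of_ne hv] using (hpos v).le
    have hN : 0 < ∑ v, update x i s v ^ k := lt_of_lt_of_le (by simpa using pow_pos hs k)
      (single_le_sum (fun v _ => pow_nonneg (hy v) k) (mem_univ i))
    have := qform_le_qrad_mul hk hu hy hN
    simp only [φ, update_eq_self, hmax, hsum]
    linarith
  have hderiv := hlocal.hasDerivAt_eq_zero
    ((hasDerivAt_qform_update E x i).sub ((hasDerivAt_sum_pow_update x i).const_mul (qrad k E)))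
  have hk0 : (k : ℝ) ≠ 0 := by exact_mod_cast (by omega : k ≠ 0)
  exact mul_left_cancel₀ hk0 (by linear_combination hderiv)

end Spectral

theorem two_switch_qrad_general (k r : ℕ) (hr1 : 1 ≤ r) (hrk : r ≤ k - 1)
    {V : Type*} [Fintype V] [DecidableEq V]
    (E : Finset (Finset V)) (hu : IsUniform k E)
    (e f : Finset V) (he : e ∈ E) (hf : f ∈ E) (hef : Disjoint e f)
    (U1 V1 : Finset V) (hU1 : U1 ⊆ e) (hV1 : V1 ⊆ f)
    (hU1c : U1.card = r) (hV1c : V1.card = r)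
    (e' f' : Finset V) (he' : e' = (e \ U1) ∪ V1) (hf' : f' = (f \ V1) ∪ U1)
    (he'E : e' ∉ E) (hf'E : f' ∉ E) (he'f' : e' ≠ f')
    (E' : Finset (Finset V)) (hE' : E' = (E \ {e, f}) ∪ {e', f'})
    (x : V → ℝ) (hx : IsPrincipalEig k E x)
    (h1 : (∏ v ∈ V1, x v) ≤ (∏ v ∈ U1, x v))
    (h2 : (∏ v ∈ e \ U1, x v) ≤ (∏ v ∈ f \ V1, x v)) :
    qrad k E ≤ qrad k E' ∧
      ((∏ v ∈ V1, x v) < (∏ v ∈ U1, x v) ∨ (∏ v ∈ e \ U1, x v) < (∏ v ∈ f \ V1, x v) →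
        qrad k E < qrad k E') := by
  subst he' hf'
  obtain rfl : E' = twoSwitch E e f U1 V1 := hE'
  have hk : 1 ≤ k := by omega
  have hu' := hu.twoSwitch he hf hef hU1 hV1 (hU1c.trans hV1c.symm)
  have hgain := qform_twoSwitch k x he hf hef hU1 hV1 he'E hf'E he'f'
  have hq := hx.qrad_eq_qform hk hu
  obtain ⟨hpos, hunit, heig⟩ := hx
  have hq' := qform_le_qrad (E := twoSwitch E e f U1 V1) hk (fun v => (hpos v).le) hunit
  have hgain_nonneg : 0 ≤ (k : ℝ) * ((∏ v ∈ U1, x v - ∏ v ∈ V1, x v) *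
      (∏ v ∈ f \ V1, x v - ∏ v ∈ e \ U1, x v)) :=
    mul_nonneg k.cast_nonneg (mul_nonneg (sub_nonneg.2 h1) (sub_nonneg.2 h2))
  refine ⟨by linarith, fun hstrict => (by linarith : qrad k E ≤ _).lt_of_ne fun heq => ?_⟩
  have hx' := isPrincipalEig_of_qform_eq_qrad hk hu' hpos hunit (by linarith)
  have hQ : ∀ w, Qcomp k (twoSwitch E e f U1 V1) x w = Qcomp k E x w := fun w => by
    rw [hx'.2.2, heig, heq]
  obtain ⟨hUV, hAB⟩ := prod_eq_of_Qcomp_twoSwitch_eq hk hpos he hf hef hU1 hV1 he'E hf'E he'f' hQ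
    (card_pos.1 (by rw [card_sdiff_of_subset hU1, hu e he]; omega)) (card_pos.1 (by omega))
  rcases hstrict with h | h
  · exact h.ne' hUV
  · exact h.ne hAB

/-- the 2-switch lemma for the signless Laplacian spectral radius. -/
theorem two_switch_qrad (k r : ℕ) (hr1 : 1 ≤ r) (hrk : r ≤ k - 1)
    {V : Type*} [Fintype V] [DecidableEq V]
    (E : Finset (Finset V)) (hu : IsUniform k E) (hc : HConnected E)
    (e f : Finset V) (he : e ∈ E) (hf : f ∈ E) (hef : Disjoint e f)
    (U1 V1 : Finset V) (hU1 : U1 ⊆ e) (hV1 : V1 ⊆ f)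
    (hU1c : U1.card = r) (hV1c : V1.card = r)
    (e' f' : Finset V) (he' : e' = (e \ U1) ∪ V1) (hf' : f' = (f \ V1) ∪ U1)
    (he'E : e' ∉ E) (hf'E : f' ∉ E) (he'f' : e' ≠ f')
    (E' : Finset (Finset V)) (hE' : E' = (E \ {e, f}) ∪ {e', f'})
    (hc' : HConnected E')
    (x : V → ℝ) (hx : IsPrincipalEig k E x)
    (h1 : (∏ v ∈ V1, x v) ≤ (∏ v ∈ U1, x v))
    (h2 : (∏ v ∈ e \ U1, x v) ≤ (∏ v ∈ f \ V1, x v)) :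
    qrad k E ≤ qrad k E' ∧
      ((∏ v ∈ V1, x v) < (∏ v ∈ U1, x v) ∨ (∏ v ∈ e \ U1, x v) < (∏ v ∈ f \ V1, x v) →
        qrad k E < qrad k E') :=
  two_switch_qrad_general k r hr1 hrk E hu e f he hf hef U1 V1 hU1 hV1 hU1c hV1c e' f' he' hf' he'E
    hf'E he'f' E' hE' x hx h1 h2

end SLT
end

section
/- Let G' be obtained from a k-uniform supertree G by edge-releasing a non-pendent edge e at a vertex v of e (moving all edges adjacent to e but not containing v, from their intersection vertices with e, to v). Then the diameter of G' is at most the diameter of G. -/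
/-!
Collapsing `e` onto `v` (every vertex of `e` goes to `v`, every edge `f` to its released copy)
sends walks of `G` to walks of `G'` of the same length, so distances between vertices outside
`e \ {v}` do not grow. For `u ∈ e \ {v}`, the walk `u, e` followed by the image of a shortest
path from any `x ∈ e` to `w` gives `d'(u, w) ≤ d(x, w) + 1`.

In a supertree two paths with the same ends start with the same edge. Take `x ∈ e` nearest to
`w`; for any other `y ∈ e`, the edge `e` followed by a shortest path from `x` is a path from `y`
to `w`, so a shortest path from `y` also starts with `e`, and its next vertex lies in `e`; hence
`d(y, w) ≥ d(x, w) + 1`. Choosing `y ∈ {u, v}` different from `x` gives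
`d'(u, w) ≤ d(y, w) ≤ diam G`.
-/

open scoped Classical BigOperators

namespace SLT

variable {V : Type*}

/-- Distance between two vertices: length of a shortest path. -/
noncomputable def hdist (E : Finset (Finset V)) (u v : V) : ℕ :=
  sInf {l | ∃ vs es, IsPath E vs es ∧ es.length = l ∧
    vs.head? = some u ∧ vs.getLast? = some v}

/-- Diameter: maximum distance over all pairs of vertices. -/
noncomputable def hdiam [Fintype V] (E : Finset (Finset V)) : ℕ :=
  sSup {d | ∃ u v : V, hdist E u v = d}

/-- An edge is pendent if it contains at least `k-1` vertices of degree 1. -/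
def IsPendentEdge (k : ℕ) (E : Finset (Finset V)) (e : Finset V) : Prop :=
  k - 1 ≤ (e.filter (fun w => degree E w = 1)).card

namespace Chains

variable {V : Type*} {vs : List V} {es : List (Finset V)}

theorem not_nil (es : List (Finset V)) : ¬ Chains [] es := by
  cases es <;> exact id

theorem length_eq : ∀ {vs : List V} {es : List (Finset V)}, Chains vs es →
    vs.length = es.length + 1
  | [_], [], _ => rfl
  | _ :: _ :: _, _ :: _, h => by simpa using length_eq h.2.2
  | [], _, h => (not_nil _ h).elim
  | [_], _ :: _, h => nomatch h
  | _ :: _ :: _, [], h => nomatch h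

theorem cons_of_mem {a x : V} {t : List V} {f : Finset V} {r : List (Finset V)}
    (h : Chains (a :: t) (f :: r)) (hx : x ∈ f) : Chains (x :: t) (f :: r) := by
  match t, h with
  | _ :: _, h => exact ⟨hx, h.2⟩

theorem take : ∀ (k : ℕ) {vs : List V} {es : List (Finset V)}, Chains vs es →
    Chains (vs.take (k + 1)) (es.take k)
  | 0, _ :: _, _, _ => trivial
  | _ + 1, [_], [], _ => trivial
  | k + 1, _ :: _ :: _, _ :: _, h => ⟨h.1, h.2.1, take k h.2.2⟩
  | _, [], _, h => (not_nil _ h).elim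
  | _ + 1, [_], _ :: _, h => nomatch h
  | _ + 1, _ :: _ :: _, [], h => nomatch h

theorem drop : ∀ (k : ℕ) {vs : List V} {es : List (Finset V)}, Chains vs es →
    k ≤ es.length → Chains (vs.drop k) (es.drop k)
  | 0, _, _, h, _ => h
  | k + 1, _ :: _ :: _, _ :: _, h, hk => drop k h.2.2 (by simpa using hk)
  | _ + 1, _, [], _, hk => by simp at hk
  | _ + 1, [], _ :: _, h, _ => (not_nil _ h).elim
  | _ + 1, [_], _ :: _, h, _ => nomatch h

theorem getElem_mem (h : Chains vs es) (i : ℕ) (hi : i < es.length) :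
    vs[i]'(by have := h.length_eq; omega) ∈ es[i] ∧
      vs[i + 1]'(by have := h.length_eq; omega) ∈ es[i] := by
  have hi' : i + 1 < vs.length := by have := h.length_eq; omega
  have hd := h.drop i hi.le
  rw [List.drop_eq_getElem_cons hi, List.drop_eq_getElem_cons (by omega : i < vs.length),
    List.drop_eq_getElem_cons hi'] at hd
  exact ⟨hd.1, hd.2.1⟩

theorem concat : ∀ {vs : List V} {es : List (Finset V)} {c a : V} {g : Finset V},
    Chains vs es → vs.getLast? = some c → c ∈ g → a ∈ g → Chains (vs ++ [a]) (es ++ [g])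
  | [_], [], _, _, _, _, hl, hc, ha => by
      simp only [List.getLast?_singleton, Option.some.injEq] at hl
      exact ⟨hl ▸ hc, ha, trivial⟩
  | _ :: _ :: _, _ :: _, _, _, _, h, hl, hc, ha =>
      ⟨h.1, h.2.1, concat h.2.2 (by simpa using hl) hc ha⟩
  | [], _, _, _, _, h, _, _, _ => (not_nil _ h).elim
  | [_], _ :: _, _, _, _, h, _, _, _ => nomatch h
  | _ :: _ :: _, [], _, _, _, h, _, _, _ => nomatch h

theorem reverse : ∀ {vs : List V} {es : List (Finset V)}, Chains vs es →
    Chains vs.reverse es.reverse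
  | [_], [], _ => trivial
  | _ :: _ :: _, _ :: _, h => by
      simpa using h.2.2.reverse.concat (by simp) h.2.1 h.1
  | [], _, h => (not_nil _ h).elim
  | [_], _ :: _, h => nomatch h
  | _ :: _ :: _, [], h => nomatch h

theorem map {W : Type*} {σ : V → W} {τ : Finset V → Finset W} (hστ : ∀ x f, x ∈ f → σ x ∈ τ f) :
    ∀ {vs : List V} {es : List (Finset V)}, Chains vs es → Chains (vs.map σ) (es.map τ)
  | [_], [], _ => trivial
  | _ :: _ :: _, _ :: _, h => ⟨hστ _ _ h.1, hστ _ _ h.2.1, map hστ h.2.2⟩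
  | [], _, h => (not_nil _ h).elim
  | [_], _ :: _, h => nomatch h
  | _ :: _ :: _, [], h => nomatch h

theorem exists_mem_of_mem : ∀ {a : V} {t : List V} {es : List (Finset V)},
    Chains (a :: t) es → ∀ f ∈ es, ∃ x ∈ t, x ∈ f
  | _, b :: _, _ :: _, h, _, hf => by
      rcases List.mem_cons.mp hf with rfl | hf
      · exact ⟨b, by simp, h.2.1⟩
      · obtain ⟨x, hx, hxf⟩ := exists_mem_of_mem h.2.2 _ hf
        exact ⟨x, List.mem_cons_of_mem _ hx, hxf⟩
  | _, _, [], _, _, hf => by simp at hf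
  | _, [], _ :: _, h, _, _ => nomatch h

end Chains

section Path

variable {V : Type*} {E : Finset (Finset V)} {vs : List V} {es : List (Finset V)} {a b : V}

theorem IsPath.drop (h : IsPath E vs es) {k : ℕ} (hk : k ≤ es.length) :
    IsPath E (vs.drop k) (es.drop k) :=
  ⟨h.1.sublist (List.drop_sublist _ _), h.2.1.sublist (List.drop_sublist _ _),
    fun f hf => h.2.2.1 f (List.mem_of_mem_drop hf), h.2.2.2.drop k hk⟩

theorem IsPath.take (h : IsPath E vs es) (k : ℕ) : IsPath E (vs.take (k + 1)) (es.take k) :=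
  ⟨h.1.sublist (List.take_sublist _ _), h.2.1.sublist (List.take_sublist _ _),
    fun f hf => h.2.2.1 f (List.mem_of_mem_take hf), h.2.2.2.take k⟩

theorem IsPath.cons (h : IsPath E (b :: vs) es) {f : Finset V} (hf : f ∈ E) (ha : a ∈ f)
    (hb : b ∈ f) (hav : a ∉ b :: vs) (hfes : f ∉ es) : IsPath E (a :: b :: vs) (f :: es) :=
  ⟨List.nodup_cons.mpr ⟨hav, h.1⟩, List.nodup_cons.mpr ⟨hfes, h.2.1⟩,
    by simpa [hf] using h.2.2.1, ha, hb, h.2.2.2⟩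

theorem IsPath.cons_of_mem {t : List V} {f : Finset V} {r : List (Finset V)}
    (h : IsPath E (b :: t) (f :: r)) (ha : a ∈ f) (hat : a ∉ t) : IsPath E (a :: t) (f :: r) :=
  ⟨List.nodup_cons.mpr ⟨hat, (List.nodup_cons.mp h.1).2⟩, h.2.1, h.2.2.1, h.2.2.2.cons_of_mem ha⟩

theorem IsPath.reverse (h : IsPath E vs es) : IsPath E vs.reverse es.reverse :=
  ⟨List.nodup_reverse.mpr h.1, List.nodup_reverse.mpr h.2.1,
    fun f hf => h.2.2.1 f (List.mem_reverse.mp hf), h.2.2.2.reverse⟩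

theorem hdist_le_of_isPath (h : IsPath E vs es) (ha : vs.head? = some a)
    (hb : vs.getLast? = some b) : hdist E a b ≤ es.length :=
  Nat.sInf_le ⟨vs, es, h, rfl, ha, hb⟩

theorem HConnected.exists_isPath_hdist (hc : HConnected E) (a b : V) :
    ∃ vs es, IsPath E vs es ∧ es.length = hdist E a b ∧
      vs.head? = some a ∧ vs.getLast? = some b := by
  obtain ⟨vs, es, h, ha, hb⟩ := hc a b
  exact Nat.sInf_mem (s := {l | ∃ vs es, IsPath E vs es ∧ es.length = l ∧
    vs.head? = some a ∧ vs.getLast? = some b}) ⟨es.length, vs, es, h, rfl, ha, hb⟩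

theorem hdist_comm (E : Finset (Finset V)) (a b : V) : hdist E a b = hdist E b a := by
  unfold hdist
  congr 1
  ext l
  constructor <;> rintro ⟨vs, es, h, hl, ha, hb⟩ <;>
    exact ⟨vs.reverse, es.reverse, h.reverse, by simpa, by simpa, by simpa⟩

theorem IsPath.hdist_getElem_le (h : IsPath E vs es) (hb : vs.getLast? = some b) {i : ℕ}
    (hi : i < vs.length) : hdist E vs[i] b ≤ es.length - i := by
  have hlen := h.2.2.2.length_eq
  simpa using hdist_le_of_isPath (h.drop (k := i) (by omega))
    (by simp [List.getElem?_eq_getElem hi]) (by rw [List.getLast?_drop, if_neg (by omega), hb])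

theorem IsPath.exists_isPath_cons (h : IsPath E vs es) (hb : vs.head? = some b) {f : Finset V}
    (hf : f ∈ E) (ha : a ∈ f) (hbf : b ∈ f) :
    ∃ vs' es', IsPath E vs' es' ∧ es'.length ≤ es.length + 1 ∧
      vs'.head? = some a ∧ vs'.getLast? = vs.getLast? := by
  have hlen := h.2.2.2.length_eq
  by_cases hav : a ∈ vs
  · obtain ⟨i, hi, rfl⟩ := List.getElem_of_mem hav
    exact ⟨vs.drop i, es.drop i, h.drop (by omega), by rw [List.length_drop]; omega,
      by simp [List.getElem?_eq_getElem hi], by rw [List.getLast?_drop, if_neg (by omega)]⟩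
  by_cases hfes : f ∈ es
  · obtain ⟨j, hj, rfl⟩ := List.getElem_of_mem hfes
    have hd := h.drop (k := j) hj.le
    rw [List.drop_eq_getElem_cons (by omega : j < vs.length), List.drop_eq_getElem_cons hj] at hd
    refine ⟨a :: vs.drop (j + 1), es.drop j, ?_, by rw [List.length_drop]; omega, rfl, ?_⟩
    · rw [List.drop_eq_getElem_cons hj]
      exact hd.cons_of_mem ha fun h' => hav (List.mem_of_mem_drop h')
    · have hne : vs.drop (j + 1) ≠ [] := List.ne_nil_of_length_pos (by rw [List.length_drop]; omega)
      rw [List.getLast?_cons_of_ne_nil hne, List.getLast?_drop, if_neg (by omega)]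
  obtain ⟨t, rfl⟩ := List.head?_eq_some_iff.mp hb
  exact ⟨a :: b :: t, f :: es, h.cons hf ha hbf hav hfes, by simp, rfl, by simp⟩

theorem Chains.exists_isPath : ∀ {vs : List V} {es : List (Finset V)}, Chains vs es →
    (∀ f ∈ es, f ∈ E) → ∃ vs' es', IsPath E vs' es' ∧ es'.length ≤ es.length ∧
      vs'.head? = vs.head? ∧ vs'.getLast? = vs.getLast?
  | [x], [], _, _ => ⟨[x], [], ⟨by simp, by simp, by simp, trivial⟩, le_rfl, rfl, rfl⟩
  | _ :: _ :: _, f :: _, h, hE => by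
      obtain ⟨vs', es', hp, hlen, hh, hl⟩ := h.2.2.exists_isPath fun g hg => hE g (by simp [hg])
      obtain ⟨vs'', es'', hp', hlen', hh', hl'⟩ :=
        hp.exists_isPath_cons hh (hE f (by simp)) h.1 h.2.1
      exact ⟨vs'', es'', hp', by rw [List.length_cons]; omega, hh', by rw [hl', hl]; simp⟩
  | [], _, h, _ => (Chains.not_nil _ h).elim
  | [_], _ :: _, h, _ => nomatch h
  | _ :: _ :: _, [], h, _ => nomatch h

theorem hdist_le_of_chains (h : Chains vs es) (hE : ∀ f ∈ es, f ∈ E)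
    (ha : vs.head? = some a) (hb : vs.getLast? = some b) : hdist E a b ≤ es.length := by
  obtain ⟨vs', es', hp, hlen, hh, hl⟩ := h.exists_isPath hE
  exact (hdist_le_of_isPath hp (hh.trans ha) (hl.trans hb)).trans hlen

theorem HConnected.hdist_le_hdiam [Fintype V] (hc : HConnected E) (a b : V) :
    hdist E a b ≤ hdiam E := by
  refine le_csSup ⟨E.card, ?_⟩ ⟨a, b, rfl⟩
  rintro _ ⟨x, y, rfl⟩
  obtain ⟨vs, es, h, hl, -, -⟩ := hc.exists_isPath_hdist x y
  rw [← hl, ← List.toFinset_card_of_nodup h.2.1]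
  exact Finset.card_le_card fun f hf => h.2.2.1 f (List.mem_toFinset.mp hf)

end Path

section Acyclic

variable {V : Type*} {E : Finset (Finset V)} {vs : List V} {es : List (Finset V)} {a b : V}

theorem IsPath.isCycle_concat (h : IsPath E vs es) (hes : es ≠ []) (ha : vs.head? = some a)
    (hb : vs.getLast? = some b) {g : Finset V} (hg : g ∈ E) (hges : g ∉ es) (hag : a ∈ g)
    (hbg : b ∈ g) : IsCycle E vs (es ++ [g]) := by
  refine ⟨?_, h.1, h.2.1.append (List.nodup_singleton g) (List.disjoint_singleton.mpr hges),
    ?_, a, ha, h.2.2.2.concat hb hbg hag⟩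
  · have := List.length_pos_iff.mpr hes
    rw [List.length_append, List.length_singleton]
    omega
  · simpa [or_imp, forall_and, hg] using h.2.2.1

variable (hacyc : ∀ vs es, ¬ IsCycle E vs es)
include hacyc

theorem IsPath.mem_take_of_chord (h : IsPath E vs es) (ha : vs.head? = some a)
    {g : Finset V} (hg : g ∈ E) (hag : a ∈ g) {k : ℕ} (hk0 : 0 < k) (hk : k < vs.length)
    (hkg : vs[k] ∈ g) : g ∈ es.take k := by
  by_contra hges
  have hlen := h.2.2.2.length_eq
  refine hacyc _ _ ((h.take k).isCycle_concat ?_ ?_ ?_ hg hges hag hkg)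
  · exact List.ne_nil_of_length_pos (by rw [List.length_take]; omega)
  · rwa [List.head?_take, if_neg (by omega)]
  · simp [List.getLast?_take, List.getElem?_eq_getElem hk]

theorem IsPath.eq_of_chord {t : List V} {f : Finset V} {r : List (Finset V)}
    (h : IsPath E (a :: t) (f :: r)) {g : Finset V} (hg : g ∈ E) (hag : a ∈ g) {x : V}
    (hxt : x ∈ t) (hxg : x ∈ g) : g = f := by
  have hlen : t.length = r.length + 1 := by simpa using h.2.2.2.length_eq
  obtain ⟨k, hk, rfl⟩ := List.getElem_of_mem hxt
  have hmem := h.mem_take_of_chord hacyc rfl hg hag (k := k + 1) (by omega)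
    (by rw [List.length_cons]; omega) hxg
  obtain ⟨l, hl, hgl⟩ := List.getElem_of_mem hmem
  rw [List.getElem_take] at hgl
  subst hgl
  -- `g` is the `l`-th edge; for `l > 0` it is also a chord from `a` to `vs[l]` avoiding the
  -- first `l` edges, which is impossible
  cases l with
  | zero => rfl
  | succ l =>
    exfalso
    have hl' : l + 1 < (f :: r).length := hl.trans_le (List.length_take_le' _ _)
    have hl'' : l + 1 < (a :: t).length := by rw [List.length_cons] at hl' ⊢; omega
    refine List.disjoint_take_drop h.2.1 le_rfl
      (h.mem_take_of_chord hacyc rfl hg hag (by omega) hl'' (h.2.2.2.getElem_mem (l + 1) hl').1) ?_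
    rw [List.drop_eq_getElem_cons hl']
    exact List.mem_cons_self

theorem IsPath.first_edge_eq {a b : V} {t₁ t₂ : List V} {f₁ f₂ : Finset V}
    {r₁ r₂ : List (Finset V)} (h₁ : IsPath E (a :: t₁) (f₁ :: r₁))
    (h₂ : IsPath E (a :: t₂) (f₂ :: r₂)) (hb₁ : (a :: t₁).getLast? = some b)
    (hb₂ : (a :: t₂).getLast? = some b) : f₁ = f₂ := by
  obtain ⟨y, t₂, rfl⟩ : ∃ y t, t₂ = y :: t := by
    match t₂, h₂.2.2.2 with
    | y :: t, _ => exact ⟨y, t, rfl⟩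
  have hf₂ : f₂ ∈ E := h₂.2.2.1 f₂ (by simp)
  have hchord : ∀ x ∈ t₁, x ∈ f₂ → f₁ = f₂ := fun x hx hxf =>
    (h₁.eq_of_chord hacyc hf₂ h₂.2.2.2.1 hx hxf).symm
  by_cases hyt : y ∈ t₁
  · exact hchord y hyt h₂.2.2.2.2.1
  by_cases hfr : f₂ ∈ f₁ :: r₁
  · obtain ⟨x, hx, hxf⟩ := h₁.2.2.2.exists_mem_of_mem f₂ hfr
    exact hchord x hx hxf
  have hya : y ≠ a := fun hy => (List.nodup_cons.mp h₂.1).1 (by simp [hy])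
  -- `y, f₂` can now be prepended to the first path; recurse on the second path from `y`
  cases r₂ with
  | nil =>
    obtain rfl : t₂ = [] := by simpa using h₂.2.2.2.length_eq
    obtain rfl : y = b := by simpa using hb₂
    simpa [hya, hyt] using List.mem_of_getLast? hb₁
  | cons g r₂ =>
    have := (h₁.cons hf₂ h₂.2.2.2.2.1 h₂.2.2.2.1 (by simp [hya, hyt]) hfr).first_edge_eq
      (by simpa using h₂.drop (k := 1) (by simp)) (by simpa using hb₁) (by simpa using hb₂)
    exact ((List.nodup_cons.mp h₂.2.1).1 (this ▸ List.mem_cons_self)).elim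
termination_by r₂.length

theorem hdist_lt_of_forall_le (hconn : HConnected E) {e : Finset V} (he : e ∈ E) {x y w : V}
    (hx : x ∈ e) (hmin : ∀ z ∈ e, hdist E x w ≤ hdist E z w) (hy : y ∈ e) (hyx : y ≠ x) :
    hdist E x w < hdist E y w := by
  obtain ⟨vs, es, hP, hlen, hx₀, hw⟩ := hconn.exists_isPath_hdist x w
  obtain ⟨t, rfl⟩ := List.head?_eq_some_iff.mp hx₀
  have hoff : ∀ z ∈ t, z ∉ e := by
    intro z hz hze
    obtain ⟨i, hi, rfl⟩ := List.getElem_of_mem hz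
    have h₁ : hdist E t[i] w ≤ es.length - (i + 1) :=
      hP.hdist_getElem_le hw (i := i + 1) (by rw [List.length_cons]; omega)
    have h₂ := hmin _ hze
    have hl : t.length = es.length := by simpa using hP.2.2.2.length_eq
    omega
  have hQ : IsPath E (y :: x :: t) (e :: es) :=
    hP.cons he hy hx (by simpa [hyx] using fun h => hoff y h hy) fun h => by
      obtain ⟨z, hz, hze⟩ := hP.2.2.2.exists_mem_of_mem e h
      exact hoff z hz hze
  by_contra! hle
  obtain ⟨vs', es', hR, hlen', hy₀, hw'⟩ := hconn.exists_isPath_hdist y w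
  obtain ⟨t', rfl⟩ := List.head?_eq_some_iff.mp hy₀
  match t', es', hR with
  | [], [], _ =>
    obtain rfl : y = w := by simpa using hw'
    exact (List.nodup_cons.mp hQ.1).1 (List.mem_of_getLast? hw)
  | z :: _, f :: r, hR =>
    have hfe : f = e := hR.first_edge_eq hacyc hQ hw' (by simpa using hw)
    have h₁ : hdist E z w ≤ r.length := hR.hdist_getElem_le hw' (i := 1) (by simp)
    have h₂ := hmin z (hfe ▸ hR.2.2.2.2.1)
    rw [List.length_cons] at hlen'
    omega
  | [], _ :: _, hR => nomatch hR.2.2.2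
  | _ :: _, [], hR => nomatch hR.2.2.2

end Acyclic

section Release

variable {V : Type*} [DecidableEq V]

def releaseEdge (e : Finset V) (v : V) (f : Finset V) : Finset V :=
  if v ∈ f ∨ Disjoint f e then f else insert v (f \ e)

def release (E : Finset (Finset V)) (e : Finset V) (v : V) : Finset (Finset V) :=
  E.filter (fun f => v ∈ f ∨ Disjoint f e) ∪
    (E.filter (fun f => ¬ (v ∈ f ∨ Disjoint f e))).image (fun f => insert v (f \ e))

def collapse (e : Finset V) (v x : V) : V :=
  if x ∈ e then v else x

variable {E : Finset (Finset V)} {e f : Finset V} {v : V}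

theorem releaseEdge_mem_release (hf : f ∈ E) : releaseEdge e v f ∈ release E e v := by
  unfold releaseEdge release
  split_ifs with h
  · exact Finset.mem_union_left _ (Finset.mem_filter.mpr ⟨hf, h⟩)
  · exact Finset.mem_union_right _ (Finset.mem_image_of_mem _ (Finset.mem_filter.mpr ⟨hf, h⟩))

theorem mem_release (he : e ∈ E) (hv : v ∈ e) : e ∈ release E e v := by
  simpa [releaseEdge, hv] using releaseEdge_mem_release (v := v) he

theorem collapse_mem_releaseEdge {x : V} (hx : x ∈ f) : collapse e v x ∈ releaseEdge e v f := by
  unfold collapse releaseEdge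
  by_cases hxe : x ∈ e
  · have : ¬ Disjoint f e := Finset.not_disjoint_iff.mpr ⟨x, hx, hxe⟩
    split_ifs with h <;> simp_all
  · split_ifs <;> simp_all

theorem collapse_eq_self {x : V} (hx : ¬ (x ∈ e ∧ x ≠ v)) : collapse e v x = x := by
  unfold collapse
  split_ifs with h
  · exact (not_not.mp fun hxv => hx ⟨h, hxv⟩).symm
  · rfl

theorem hdist_release_collapse_le (hconn : HConnected E) (a b : V) :
    hdist (release E e v) (collapse e v a) (collapse e v b) ≤ hdist E a b := by
  obtain ⟨vs, es, h, hlen, ha, hb⟩ := hconn.exists_isPath_hdist a b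
  have := hdist_le_of_chains (h.2.2.2.map fun _ _ => collapse_mem_releaseEdge)
    (E := release E e v) (a := collapse e v a) (b := collapse e v b)
    (by simpa using fun f hf => releaseEdge_mem_release (h.2.2.1 f hf))
    (by simp [ha]) (by simp [hb])
  simpa [hlen] using this

theorem hdist_release_le_succ (hconn : HConnected E) (he : e ∈ E) (hv : v ∈ e) {u x w : V}
    (hu : u ∈ e) (hx : x ∈ e) : hdist (release E e v) u w ≤ hdist E x w + 1 := by
  by_cases hw : w ∈ e
  · have := hdist_le_of_chains (show Chains [u, w] [e] from ⟨hu, hw, trivial⟩)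
      (by simpa using mem_release he hv) rfl rfl
    exact this.trans (Nat.le_add_left _ _)
  obtain ⟨vs, es, h, hlen, hx₀, hwl⟩ := hconn.exists_isPath_hdist x w
  obtain ⟨t, rfl⟩ := List.head?_eq_some_iff.mp hx₀
  have hch : Chains (u :: (x :: t).map (collapse e v)) (e :: es.map (releaseEdge e v)) :=
    ⟨hu, by simpa [collapse, hx], h.2.2.2.map fun _ _ => collapse_mem_releaseEdge⟩
  have := hdist_le_of_chains hch (E := release E e v) (by
      simpa [mem_release he hv] using fun f hf => releaseEdge_mem_release (h.2.2.1 f hf))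
    (b := w) rfl (by
      rw [List.map_cons, List.getLast?_cons_cons, ← List.map_cons, List.getLast?_map, hwl]
      simp [collapse, hw])
  simpa [hlen] using this

variable [Fintype V] (hconn : HConnected E) (hacyc : ∀ vs es, ¬ IsCycle E vs es)
  (he : e ∈ E) (hv : v ∈ e)
include hconn hacyc he hv

theorem hdist_release_le_hdiam_of_mem {u : V} (hu : u ∈ e) (huv : u ≠ v) (w : V) :
    hdist (release E e v) u w ≤ hdiam E := by
  obtain ⟨x, hx, hmin⟩ := e.exists_min_image (hdist E · w) ⟨v, hv⟩
  obtain ⟨y, hy, hyx⟩ : ∃ y ∈ e, y ≠ x := by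
    by_cases hux : u = x
    · exact ⟨v, hv, fun h => huv (hux.trans h.symm)⟩
    · exact ⟨u, hu, hux⟩
  calc hdist (release E e v) u w ≤ hdist E x w + 1 := hdist_release_le_succ hconn he hv hu hx
    _ ≤ hdist E y w := hdist_lt_of_forall_le hacyc hconn he hx hmin hy hyx
    _ ≤ hdiam E := hconn.hdist_le_hdiam y w

theorem hdist_release_le_hdiam (u w : V) : hdist (release E e v) u w ≤ hdiam E := by
  by_cases hu : u ∈ e ∧ u ≠ v
  · exact hdist_release_le_hdiam_of_mem hconn hacyc he hv hu.1 hu.2 w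
  by_cases hw : w ∈ e ∧ w ≠ v
  · rw [hdist_comm]
    exact hdist_release_le_hdiam_of_mem hconn hacyc he hv hw.1 hw.2 u
  simpa [collapse_eq_self hu, collapse_eq_self hw] using
    (hdist_release_collapse_le (e := e) (v := v) hconn u w).trans (hconn.hdist_le_hdiam u w)

end Release

theorem edge_releasing_diam_general (k : ℕ) {V : Type*} [Fintype V] [DecidableEq V]
    (E : Finset (Finset V)) (hG : IsSupertree k E)
    (e : Finset V) (he : e ∈ E) (v : V) (hv : v ∈ e)
    (E' : Finset (Finset V))
    (hE' : E' = E.filter (fun f => v ∈ f ∨ Disjoint f e) ∪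
      (E.filter (fun f => ¬ (v ∈ f ∨ Disjoint f e))).image (fun f => insert v (f \ e))) :
    hdiam E' ≤ hdiam E := by
  obtain ⟨-, hconn, hacyc⟩ := hG
  subst hE'
  refine csSup_le' ?_
  rintro _ ⟨u, w, rfl⟩
  exact hdist_release_le_hdiam hconn hacyc he hv u w

/-- edge-releasing a non-pendent edge `e` at `v ∈ e` does not increase
the diameter of a `k`-uniform supertree. -/
theorem edge_releasing_diam (k : ℕ) (hk : 2 ≤ k) {V : Type*} [Fintype V] [DecidableEq V]
    (E : Finset (Finset V)) (hG : IsSupertree k E)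
    (e : Finset V) (he : e ∈ E) (v : V) (hv : v ∈ e)
    (hnp : ¬ IsPendentEdge k E e)
    (E' : Finset (Finset V))
    (hE' : E' = E.filter (fun f => v ∈ f ∨ Disjoint f e) ∪
      (E.filter (fun f => ¬ (v ∈ f ∨ Disjoint f e))).image (fun f => insert v (f \ e))) :
    hdiam E' ≤ hdiam E :=
  edge_releasing_diam_general k E hG e he v hv E' hE'

end SLT
end
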